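/- Let n ≥ 3, k = 2, I_j = {1,j} for 2 ≤ j ≤ n, and ξ(x) = ∏_{j=2}^n ω_{I_j}(π_{I_j}(x)) for x ∈ ℤ^n, where the ω_{I_j} are independent Bernoulli site percolation configurations on ℤ^2_{I_j} with parameters p_{I_j}. Let B = ([0,N] × [0,m_2] × ... × [0,m_n]) ∩ ℤ^n. Then the probability that ξ has a bottom-to-top crossing of B equals the product over j = 2,...,n of the probabilities that ω_{I_j} has a bottom-to-top crossing of the rectangle π_{I_j}(B): ℙ(ξ ∈ 𝓑𝓣(B)) = ∏_{j=2}^n ℙ_{p_{I_j}}(𝓑𝓣(π_{I_j}(B))). -/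

import Mathlib

/-!
A crossing of the box projects onto a crossing of every plane rectangle, since a
nearest-neighbour step projects onto a step or a stay.

Conversely, read each plane crossing as the `±1` walk of heights of its maximal horizontal runs,
consecutive runs being joined by one vertical step. These finitely many walks go from height `0`
to height `N` inside `[0, N]`, so by discrete mountain climbing they have a common
reparametrisation: in the graph of pairs of positions at equal height, joined by simultaneous
unit moves, the start `(0, 0)` has degree one and every other vertex below height `N` has even
degree, so by the handshake lemma its component reaches height `N`. Along the common walk, each
plane coordinate is first moved inside its current run, one coordinate at a time, and then the
height is changed; the sites visited are open because all their projections are.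

The plane crossing events are measurable with respect to the σ-algebras generated by disjoint
families of the independent variables `F J v`, hence independent.
-/

open MeasureTheory ProbabilityTheory

namespace BernoulliHyperplane

variable {n : ℕ}

/-- Nearest-neighbor adjacency in `ℤⁿ` (`l¹`-distance one). -/
def latAdj (v w : Fin n → ℤ) : Prop := (∑ i, |v i - w i|) = 1

/-- Coordinate projection onto the sublattice spanned by the coordinates in `J`. -/
def proj (J : Finset (Fin n)) (v : Fin n → ℤ) : Fin n → ℤ := fun i => if i ∈ J then v i else 0

/-- The open cluster of `x` inside the set of sites `S`, for the openness predicate `good`: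
all sites reachable from `x` by nearest-neighbor paths of `good` sites staying in `S`. -/
def clusterIn (S : Set (Fin n → ℤ)) (good : (Fin n → ℤ) → Prop) (x : Fin n → ℤ) :
    Set (Fin n → ℤ) :=
  {v | (x ∈ S ∧ good x) ∧ Relation.ReflTransGen (fun u w => latAdj u w ∧ w ∈ S ∧ good w) x v}

/-- A site of `ℤⁿ` is open in `(n,k)`-hyperplane percolation iff all its projections onto the
`k`-dimensional coordinate sublattices are open. -/
def hpOpen (k : ℕ) (f : Finset (Fin n) → (Fin n → ℤ) → Bool) (v : Fin n → ℤ) : Prop :=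
  ∀ J : Finset (Fin n), J.card = k → f J (proj J v) = true

/-- `(f v)_{v ∈ ℤᵈ}` is an i.i.d. Bernoulli(`p`) random field on `ℤᵈ` under `μ`. -/
def IsBernoulliField (d : ℕ) (p : ℝ) {Ω : Type} [MeasurableSpace Ω] (μ : Measure Ω)
    (f : (Fin d → ℤ) → Ω → Bool) : Prop :=
  IsProbabilityMeasure μ ∧ (∀ v, Measurable (f v)) ∧
    iIndepFun f μ ∧
    ∀ v, μ {a | f v a = true} = ENNReal.ofReal p

/-- The critical probability of Bernoulli site percolation on `ℤᵈ`: the supremum of the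
parameters `p ∈ [0,1]` for which every i.i.d. Bernoulli(`p`) field on `ℤᵈ` has no infinite
open cluster at the origin almost surely. -/
noncomputable def pcSite (d : ℕ) : ℝ :=
  sSup {p : ℝ | p ∈ Set.Icc (0:ℝ) 1 ∧
    ∀ (Ω : Type) (_ : MeasurableSpace Ω) (μ : Measure Ω) (f : (Fin d → ℤ) → Ω → Bool),
      IsBernoulliField d p μ f →
      μ {a | (clusterIn Set.univ (fun v => f v a = true) 0).Infinite} = 0}

/-- The random fields `(F J v)` (for `J` a `k`-subset of `[n]` and `v` in the sublattice `ℤᵏ_J`)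
form independent i.i.d. Bernoulli(`p J`) fields: this is Bernoulli `(n,k)`-hyperplane
percolation with parameter vector `p`. -/
def IsHyperplanePercolation (n k : ℕ) (p : Finset (Fin n) → ℝ) {Ω : Type} [MeasurableSpace Ω]
    (μ : Measure Ω) (F : Finset (Fin n) → (Fin n → ℤ) → Ω → Bool) : Prop :=
  IsProbabilityMeasure μ ∧ (∀ J v, Measurable (F J v)) ∧
    iIndepFun
      (fun (q : {q : Finset (Fin n) × (Fin n → ℤ) // q.1.card = k ∧ ∀ i ∉ q.1, q.2 i = 0}) a =>
        F q.1.1 q.1.2 a) μ ∧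
    ∀ J : Finset (Fin n), J.card = k → ∀ v : Fin n → ℤ, (∀ i ∉ J, v i = 0) →
      μ {a | F J v a = true} = ENNReal.ofReal (p J)

/-- Bottom-to-top crossing of the box `B = ∏ [0, m i]` in the height coordinate `e0`,
through sites satisfying `good`. -/
def btBox (e0 : Fin n) (m : Fin n → ℕ) (good : (Fin n → ℤ) → Prop) : Prop :=
  ∃ (T : ℕ) (x : ℕ → Fin n → ℤ),
    (∀ t ≤ T, (∀ i, 0 ≤ x t i ∧ x t i ≤ (m i : ℤ)) ∧ good (x t)) ∧
    (∀ t < T, latAdj (x t) (x (t + 1))) ∧ x 0 e0 = 0 ∧ x T e0 = (m e0 : ℤ)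

/-- Bottom-to-top crossing of the projected rectangle `π_{I_j}(B)` (inside the coordinate
plane spanned by `e0` and `j`) in the height coordinate `e0`, through sites satisfying
`good`. -/
def btPlane (e0 j : Fin n) (m : Fin n → ℕ) (good : (Fin n → ℤ) → Prop) : Prop :=
  ∃ (T : ℕ) (x : ℕ → Fin n → ℤ),
    (∀ t ≤ T, (0 ≤ x t e0 ∧ x t e0 ≤ (m e0 : ℤ)) ∧ (0 ≤ x t j ∧ x t j ≤ (m j : ℤ)) ∧
      (∀ i, i ≠ e0 → i ≠ j → x t i = 0) ∧ good (x t)) ∧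
    (∀ t < T, latAdj (x t) (x (t + 1))) ∧ x 0 e0 = 0 ∧ x T e0 = (m e0 : ℤ)

end BernoulliHyperplane

open Relation Finset Function

section ReachIn

variable {α β : Type*} {P : α → Prop} {R : α → α → Prop} {a b c : α}

def ReachIn (P : α → Prop) (R : α → α → Prop) (a b : α) : Prop :=
  P a ∧ ReflTransGen (fun u w => R u w ∧ P w) a b

theorem ReachIn.refl (ha : P a) : ReachIn P R a a := ⟨ha, .refl⟩

theorem ReachIn.tail (h : ReachIn P R a b) (hbc : R b c) (hc : P c) : ReachIn P R a c :=
  ⟨h.1, h.2.tail ⟨hbc, hc⟩⟩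

theorem ReachIn.trans (hab : ReachIn P R a b) (hbc : ReachIn P R b c) : ReachIn P R a c :=
  ⟨hab.1, hab.2.trans hbc.2⟩

theorem ReachIn.target (h : ReachIn P R a b) : P b := by
  obtain ⟨ha, h⟩ := h
  rcases h.cases_tail with rfl | ⟨_, _, _, hb⟩
  exacts [ha, hb]

theorem ReachIn.symm (hR : ∀ u w, R u w → R w u) (h : ReachIn P R a b) : ReachIn P R b a := by
  obtain ⟨ha, h⟩ := h
  induction h with
  | refl => exact .refl ha
  | @tail b c _ hbc ih => exact ((ReachIn.refl hbc.2).tail (hR _ _ hbc.1) ih.1).trans ih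

theorem ReachIn.map {P' : β → Prop} {R' : β → β → Prop} (f : α → β)
    (hP : ∀ u, P u → P' (f u)) (hR : ∀ u w, P u → P w → R u w → R' (f u) (f w) ∨ f u = f w)
    (h : ReachIn P R a b) : ReachIn P' R' (f a) (f b) := by
  obtain ⟨ha, h⟩ := h
  induction h with
  | refl => exact .refl (hP a ha)
  | @tail b c hab hbc ih =>
    rcases hR b c (ReachIn.target ⟨ha, hab⟩) hbc.2 hbc.1 with hstep | heq
    · exact ih.tail hstep (hP c hbc.2)
    · exact heq ▸ ih

theorem ReachIn.mono {P' : α → Prop} {R' : α → α → Prop} (hP : ∀ u, P u → P' u)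
    (hR : ∀ u w, R u w → R' u w) (h : ReachIn P R a b) : ReachIn P' R' a b :=
  h.map id hP fun u w _ _ h => .inl (hR u w h)

theorem exists_seq_iff_reachIn :
    (∃ (T : ℕ) (x : ℕ → α), (∀ t ≤ T, P (x t)) ∧ (∀ t < T, R (x t) (x (t + 1))) ∧
      x 0 = a ∧ x T = b) ↔ ReachIn P R a b := by
  constructor
  · rintro ⟨T, x, hP, hR, rfl, rfl⟩
    refine ⟨hP 0 T.zero_le, ?_⟩
    induction T with
    | zero => rfl
    | succ T ih =>
      exact (ih (fun t ht => hP t (by omega)) fun t ht => hR t (by omega)).tail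
        ⟨hR T T.lt_succ_self, hP (T + 1) le_rfl⟩
  · rintro ⟨ha, h⟩
    induction h with
    | refl =>
      exact ⟨0, fun _ => a, fun _ _ => ha, fun _ h => absurd h (Nat.not_lt_zero _), rfl, rfl⟩
    | @tail b c _ hbc ih =>
      obtain ⟨T, x, hP, hR, h0, hT⟩ := ih
      refine ⟨T + 1, fun t => if t ≤ T then x t else c, fun t ht => ?_, fun t ht => ?_,
        by simpa using h0, by simp⟩
      · dsimp only
        split_ifs with h
        exacts [hP t h, hbc.2]
      · rcases Nat.lt_succ_iff_lt_or_eq.1 ht with ht | rfl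
        · simpa [ht.le, Nat.succ_le_of_lt ht] using hR t ht
        · simpa [hT] using hbc.1

theorem exists_seq_iff_exists_reachIn {A B : α → Prop} :
    (∃ (T : ℕ) (x : ℕ → α), (∀ t ≤ T, P (x t)) ∧ (∀ t < T, R (x t) (x (t + 1))) ∧
      A (x 0) ∧ B (x T)) ↔ ∃ a b, A a ∧ B b ∧ ReachIn P R a b := by
  constructor
  · rintro ⟨T, x, hP, hR, hA, hB⟩
    exact ⟨x 0, x T, hA, hB, exists_seq_iff_reachIn.1 ⟨T, x, hP, hR, rfl, rfl⟩⟩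
  · rintro ⟨a, b, hA, hB, h⟩
    obtain ⟨T, x, hP, hR, rfl, rfl⟩ := exists_seq_iff_reachIn.2 h
    exact ⟨T, x, hP, hR, hA, hB⟩

end ReachIn

theorem ProbabilityTheory.iIndep.iIndep_biSup {ι κ Ω : Type*} {_mΩ : MeasurableSpace Ω}
    {μ : Measure Ω} {m : ι → MeasurableSpace Ω} (h_le : ∀ i, m i ≤ _mΩ) (h : iIndep m μ)
    {T : κ → Set ι} (hT : Pairwise (Disjoint on T)) :
    iIndep (fun k => ⨆ i ∈ T k, m i) μ := by
  classical
  have := h.isProbabilityMeasure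
  refine (iIndep_iff _ μ).2 fun s f hf => ?_
  induction s using Finset.induction_on with
  | empty => simp
  | insert k s hk ih =>
    have hf' : ∀ k' ∈ s, MeasurableSet[⨆ i ∈ T k', m i] (f k') :=
      fun k' hk' => hf k' (Finset.mem_insert_of_mem hk')
    rw [Finset.set_biInter_insert, Finset.prod_insert hk, ← ih hf']
    have hdisj : Disjoint (T k) (⋃ k' ∈ s, T k') :=
      Set.disjoint_iUnion₂_right.2 fun k' hk' => hT (ne_of_mem_of_not_mem hk' hk).symm
    have hle : ⨆ k' ∈ s, ⨆ i ∈ T k', m i ≤ ⨆ i ∈ ⋃ k' ∈ s, T k', m i :=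
      iSup₂_le fun k' hk' => iSup₂_le fun i hi =>
        le_iSup₂ (f := fun i (_ : i ∈ ⋃ k' ∈ s, T k') => m i) i (Set.mem_biUnion hk' hi)
    refine (Indep_iff _ _ μ).1 (indep_of_indep_of_le_right (indep_iSup_of_disjoint h_le h hdisj)
      hle) _ _ (hf k (Finset.mem_insert_self k s)) ?_
    exact MeasurableSet.biInter s.countable_toSet fun k' hk' =>
      le_iSup₂ (f := fun k' (_ : k' ∈ s) => ⨆ i ∈ T k', m i) k' hk' _ (hf' k' hk')

theorem measurableSet_setOf_exists_seq {α Ω : Type*} [Countable α] {mΩ : MeasurableSpace Ω}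
    (G : α → Ω → Prop) (hG : ∀ v, MeasurableSet[mΩ] {a | G v a}) (C : ℕ → (ℕ → α) → Prop)
    (hC : ∀ T x y, (∀ t ≤ T, x t = y t) → C T x → C T y) :
    MeasurableSet[mΩ] {a | ∃ T x, (∀ t ≤ T, G (x t) a) ∧ C T x} := by
  have hset : {a | ∃ T x, (∀ t ≤ T, G (x t) a) ∧ C T x} =
      ⋃ (T : ℕ) (y : Fin (T + 1) → α) (_ : C T fun t => y ⟨min t T, by omega⟩),
        ⋂ t, {a | G (y t) a} := by
    ext a
    simp only [Set.mem_ofPred_eq, Set.mem_iUnion, Set.mem_iInter]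
    constructor
    · rintro ⟨T, x, hG, hC'⟩
      refine ⟨T, fun t => x t, hC T x _ (fun t ht => by simp [Nat.min_eq_left ht]) hC',
        fun t => hG t (Nat.lt_succ_iff.1 t.2)⟩
    · rintro ⟨T, y, hC', hG⟩
      exact ⟨T, _, fun t ht => hG _, hC'⟩
  rw [hset]
  exact MeasurableSet.iUnion fun T => MeasurableSet.iUnion fun y =>
    MeasurableSet.iUnion fun _ => MeasurableSet.iInter fun t => hG (y t)

theorem SimpleGraph.exists_reachable_odd_degree {V : Type*} [Fintype V] (G : SimpleGraph V)
    [DecidableRel G.Adj] {v : V} (hv : Odd (G.degree v)) :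
    ∃ w, w ≠ v ∧ G.Reachable v w ∧ Odd (G.degree w) := by
  classical
  let G' : SimpleGraph V :=
    { Adj := fun x y => G.Reachable v x ∧ G.Adj x y
      symm := ⟨fun x y h => ⟨h.1.trans h.2.reachable, h.2.symm⟩⟩
      loopless := ⟨fun x h => G.irrefl h.2⟩ }
  have hdeg : ∀ x, G.Reachable v x → G'.degree x = G.degree x := by
    intro x hx
    simp only [← card_neighborFinset_eq_degree]
    congr 1
    ext y
    simp [G', hx]
  obtain ⟨w, hwv, hw⟩ := G'.exists_ne_odd_degree_of_exists_odd_degree v (by rwa [hdeg v .rfl])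
  have hreach : G.Reachable v w := by
    by_contra h
    have : G'.degree w = 0 := by
      rw [← card_neighborFinset_eq_degree, card_eq_zero]
      ext y
      simp [G', h]
    exact Nat.not_odd_zero (this ▸ hw)
  exact ⟨w, hwv, hreach, hdeg w hreach ▸ hw⟩

theorem even_mul_add_mul_of_add_eq_two {a b c d : ℕ} (hab : a + b = 2) (hcd : c + d = 2) :
    Even (a * c + b * d) := by
  obtain rfl : b = 2 - a := by omega
  obtain rfl : d = 2 - c := by omega
  have : a ≤ 2 := by omega
  have : c ≤ 2 := by omega
  interval_cases a <;> interval_cases c <;> decide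

def IsUnitStep {α : Type*} [Add α] [One α] (a b : α) : Prop := b = a + 1 ∨ a = b + 1

instance {α : Type*} [Add α] [One α] [DecidableEq α] (a b : α) : Decidable (IsUnitStep a b) :=
  inferInstanceAs (Decidable (_ ∨ _))

theorem IsUnitStep.symm {α : Type*} [Add α] [One α] {a b : α} (h : IsUnitStep a b) :
    IsUnitStep b a :=
  Or.symm h

theorem IsUnitStep.apply_of_succ {α : Type*} [Add α] [One α] {f : ℕ → α} {K : ℕ}
    (hf : ∀ t < K, IsUnitStep (f t) (f (t + 1))) {a b : ℕ} (hab : IsUnitStep a b) (ha : a ≤ K)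
    (hb : b ≤ K) : IsUnitStep (f a) (f b) := by
  rcases hab with rfl | rfl
  exacts [hf a (by omega), (hf b (by omega)).symm]

namespace MountainClimbing

structure IsClimb (L : ℕ) (N : ℤ) (w : ℕ → ℤ) : Prop where
  start : w 0 = 0
  finish : w L = N
  step : ∀ t < L, IsUnitStep (w t) (w (t + 1))
  bounded : ∀ t ≤ L, 0 ≤ w t ∧ w t ≤ N

structure IsReparam (K : ℕ) (H : ℕ → ℤ) (L : ℕ) (w : ℕ → ℤ) (pos : ℕ → ℕ) : Prop where
  start : pos 0 = 0
  le : ∀ t ≤ K, pos t ≤ L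
  eq : ∀ t ≤ K, w (pos t) = H t
  step : ∀ t < K, IsUnitStep (pos t) (pos (t + 1))

section Reparam

variable {K K' L : ℕ} {N : ℤ} {H H' w : ℕ → ℤ} {pos a : ℕ → ℕ}

theorem IsReparam.comp (h : IsReparam K H L w pos) (ha : IsReparam K' H' K H a) :
    IsReparam K' H' L w (pos ∘ a) where
  start := by simp [ha.start, h.start]
  le t ht := h.le _ (ha.le t ht)
  eq t ht := (h.eq _ (ha.le t ht)).trans (ha.eq t ht)
  step t ht := IsUnitStep.apply_of_succ h.step (ha.step t ht) (ha.le t ht.le) (ha.le (t + 1) ht)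

theorem IsClimb.of_isReparam (hH : IsClimb K N H) (ha : IsReparam K' H' K H a) (hN : H' K' = N) :
    IsClimb K' N H' where
  start := by rw [← ha.eq 0 (Nat.zero_le _), ha.start, hH.start]
  finish := hN
  step t ht := by
    rw [← ha.eq t ht.le, ← ha.eq (t + 1) ht]
    exact IsUnitStep.apply_of_succ hH.step (ha.step t ht) (ha.le t ht.le) (ha.le (t + 1) ht)
  bounded t ht := ha.eq t ht ▸ hH.bounded _ (ha.le t ht)

end Reparam

section SyncGraph

variable {L L₁ L₂ : ℕ} {N : ℤ} {u v : ℕ → ℤ}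

def syncGraph (u v : ℕ → ℤ) (L₁ L₂ : ℕ) : SimpleGraph (Fin (L₁ + 1) × Fin (L₂ + 1)) where
  Adj p q := IsUnitStep (p.1 : ℕ) q.1 ∧ IsUnitStep (p.2 : ℕ) q.2 ∧ u p.1 = v p.2 ∧ u q.1 = v q.2
  symm := ⟨fun _ _ h => ⟨h.1.symm, h.2.1.symm, h.2.2.2, h.2.2.1⟩⟩
  loopless := ⟨fun _ h => by rcases h.1 with h | h <;> omega⟩

instance : DecidableRel (syncGraph u v L₁ L₂).Adj :=
  fun _ _ => inferInstanceAs (Decidable (_ ∧ _))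

def stepNbrs (L a : ℕ) : Finset (Fin (L + 1)) := {a' | IsUnitStep a (a' : ℕ)}

def upNbrs (L : ℕ) (u : ℕ → ℤ) (a : ℕ) : Finset (Fin (L + 1)) :=
  {a' ∈ stepNbrs L a | u a' = u a + 1}

def downNbrs (L : ℕ) (u : ℕ → ℤ) (a : ℕ) : Finset (Fin (L + 1)) :=
  {a' ∈ stepNbrs L a | u a = u a' + 1}

theorem card_stepNbrs_of_pos_of_lt {a : ℕ} (h0 : 0 < a) (hL : a < L) : #(stepNbrs L a) = 2 := by
  have : stepNbrs L a = {⟨a - 1, by omega⟩, ⟨a + 1, by omega⟩} := by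
    ext a'
    simp only [stepNbrs, mem_filter_univ]
    simp only [IsUnitStep, mem_insert, mem_singleton, Fin.ext_iff]
    omega
  rw [this, card_pair (by simp [Fin.ext_iff])]

theorem card_stepNbrs_zero (hL : 0 < L) : #(stepNbrs L 0) = 1 := by
  have : stepNbrs L 0 = {⟨1, by omega⟩} := by
    ext a'
    simp only [stepNbrs, mem_filter_univ]
    simp only [IsUnitStep, mem_singleton, Fin.ext_iff]
    omega
  rw [this, card_singleton]

theorem IsClimb.card_upNbrs_add_card_downNbrs (hu : IsClimb L N u) {a : ℕ} (ha : a ≤ L) :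
    #(upNbrs L u a) + #(downNbrs L u a) = #(stepNbrs L a) := by
  rw [upNbrs, downNbrs, ← card_filter_add_card_filter_not (s := stepNbrs L a)
    (fun a' : Fin (L + 1) => u a' = u a + 1)]
  congr 2
  refine filter_congr fun a' ha' => ?_
  have := IsUnitStep.apply_of_succ hu.step (mem_filter.1 ha').2 ha (Fin.is_le a')
  unfold IsUnitStep at this
  omega

theorem IsClimb.downNbrs_eq_empty (hu : IsClimb L N u) {a : ℕ} (ha : u a = 0) :
    downNbrs L u a = ∅ :=
  filter_false_of_mem fun a' _ => by have := (hu.bounded a' (Fin.is_le a')).1; omega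

theorem syncGraph_neighborFinset (hu : IsClimb L₁ N u) (hv : IsClimb L₂ N v)
    {p : Fin (L₁ + 1) × Fin (L₂ + 1)} (hp : u p.1 = v p.2) :
    (syncGraph u v L₁ L₂).neighborFinset p =
      upNbrs L₁ u p.1 ×ˢ upNbrs L₂ v p.2 ∪ downNbrs L₁ u p.1 ×ˢ downNbrs L₂ v p.2 := by
  ext q
  simp only [SimpleGraph.mem_neighborFinset, mem_union, mem_product, upNbrs, downNbrs,
    mem_filter, stepNbrs, mem_univ, true_and]
  constructor
  · rintro ⟨h1, h2, -, h4⟩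
    have hu' := IsUnitStep.apply_of_succ hu.step h1 (Fin.is_le _) (Fin.is_le _)
    have hv' := IsUnitStep.apply_of_succ hv.step h2 (Fin.is_le _) (Fin.is_le _)
    unfold IsUnitStep at hu' hv'
    exact (em (u q.1 = u p.1 + 1)).imp (fun h => ⟨⟨h1, h⟩, h2, by omega⟩)
      (fun h => ⟨⟨h1, by omega⟩, h2, by omega⟩)
  · rintro (⟨⟨h1, h3⟩, h2, h4⟩ | ⟨⟨h1, h3⟩, h2, h4⟩) <;> exact ⟨h1, h2, hp, by omega⟩

theorem syncGraph_degree (hu : IsClimb L₁ N u) (hv : IsClimb L₂ N v)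
    {p : Fin (L₁ + 1) × Fin (L₂ + 1)} (hp : u p.1 = v p.2) :
    (syncGraph u v L₁ L₂).degree p = #(upNbrs L₁ u p.1) * #(upNbrs L₂ v p.2) +
      #(downNbrs L₁ u p.1) * #(downNbrs L₂ v p.2) := by
  rw [← SimpleGraph.card_neighborFinset_eq_degree, syncGraph_neighborFinset hu hv hp,
    card_union_of_disjoint, card_product, card_product]
  refine disjoint_left.2 fun q hup hdown => ?_
  have h1 := (mem_filter.1 (mem_product.1 hup).1).2
  have h2 := (mem_filter.1 (mem_product.1 hdown).1).2
  omega

theorem syncGraph_degree_origin (hu : IsClimb L₁ N u) (hv : IsClimb L₂ N v) (hN : N ≠ 0) :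
    (syncGraph u v L₁ L₂).degree (0, 0) = 1 := by
  have hL₁ : 0 < L₁ := Nat.pos_of_ne_zero fun h => hN (by rw [← hu.finish, h, hu.start])
  have hL₂ : 0 < L₂ := Nat.pos_of_ne_zero fun h => hN (by rw [← hv.finish, h, hv.start])
  have hu1 : #(upNbrs L₁ u 0) = 1 := by
    simpa [hu.downNbrs_eq_empty hu.start, card_stepNbrs_zero hL₁] using
      hu.card_upNbrs_add_card_downNbrs (Nat.zero_le _)
  have hv1 : #(upNbrs L₂ v 0) = 1 := by
    simpa [hv.downNbrs_eq_empty hv.start, card_stepNbrs_zero hL₂] using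
      hv.card_upNbrs_add_card_downNbrs (Nat.zero_le _)
  rw [syncGraph_degree hu hv (by simp [hu.start, hv.start])]
  simp [hu1, hv1, hu.downNbrs_eq_empty hu.start]

theorem even_syncGraph_degree (hu : IsClimb L₁ N u) (hv : IsClimb L₂ N v)
    {p : Fin (L₁ + 1) × Fin (L₂ + 1)} (hp : u p.1 = v p.2) (h₁ : (p.1 : ℕ) < L₁)
    (h₂ : (p.2 : ℕ) < L₂) (h₀ : (p.1 : ℕ) ≠ 0 ∨ (p.2 : ℕ) ≠ 0) :
    Even ((syncGraph u v L₁ L₂).degree p) := by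
  rw [syncGraph_degree hu hv hp]
  have hu1 := hu.card_upNbrs_add_card_downNbrs h₁.le
  have hv1 := hv.card_upNbrs_add_card_downNbrs h₂.le
  by_cases ha : (p.1 : ℕ) = 0
  · have hb := h₀.resolve_left (not_not.2 ha)
    have hvb : v p.2 = 0 := by rw [← hp, ha, hu.start]
    rw [hv.downNbrs_eq_empty hvb] at hv1 ⊢
    rw [card_empty, add_zero, card_stepNbrs_of_pos_of_lt (Nat.pos_of_ne_zero hb) h₂] at hv1
    rw [hv1, card_empty, mul_zero, add_zero]
    exact even_two.mul_left _
  by_cases hb : (p.2 : ℕ) = 0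
  · have hua : u p.1 = 0 := by rw [hp, hb, hv.start]
    rw [hu.downNbrs_eq_empty hua] at hu1 ⊢
    rw [card_empty, add_zero, card_stepNbrs_of_pos_of_lt (Nat.pos_of_ne_zero ha) h₁] at hu1
    rw [hu1, card_empty, zero_mul, add_zero]
    exact even_two.mul_right _
  rw [card_stepNbrs_of_pos_of_lt (Nat.pos_of_ne_zero ha) h₁] at hu1
  rw [card_stepNbrs_of_pos_of_lt (Nat.pos_of_ne_zero hb) h₂] at hv1
  exact even_mul_add_mul_of_add_eq_two hu1 hv1

end SyncGraph

theorem IsClimb.mountain_climbing {L₁ L₂ : ℕ} {N : ℤ} {u v : ℕ → ℤ} (hu : IsClimb L₁ N u)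
    (hv : IsClimb L₂ N v) :
    ∃ K a b, IsReparam K (u ∘ a) L₁ u a ∧ IsReparam K (u ∘ a) L₂ v b ∧ u (a K) = N := by
  by_cases hN : N = 0
  · refine ⟨0, fun _ => 0, fun _ => 0, ⟨rfl, by simp, fun _ _ => rfl, by simp⟩,
      ⟨rfl, by simp, by simp [hu.start, hv.start], by simp⟩, by simp [hu.start, hN]⟩
  set G := syncGraph u v L₁ L₂
  obtain ⟨w, hw0, hreach, hodd⟩ :=
    G.exists_reachable_odd_degree (v := (0, 0)) (by rw [syncGraph_degree_origin hu hv hN]; decide)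
  obtain ⟨q, hwq⟩ : ∃ q, G.Adj w q := by
    obtain ⟨q, hq⟩ := card_pos.1 ((G.card_neighborFinset_eq_degree w).symm ▸ hodd.pos)
    exact ⟨q, (G.mem_neighborFinset w q).1 hq⟩
  have htop : u w.1 = N := by
    by_contra htop
    have h₁ : (w.1 : ℕ) < L₁ := (Fin.is_le _).lt_of_ne fun h => htop (by rw [h]; exact hu.finish)
    have h₂ : (w.2 : ℕ) < L₂ :=
      (Fin.is_le _).lt_of_ne fun h => htop (hwq.2.2.1.trans (by rw [h]; exact hv.finish))
    have h₀ : (w.1 : ℕ) ≠ 0 ∨ (w.2 : ℕ) ≠ 0 := by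
      by_contra! h
      exact hw0 (Prod.ext (Fin.ext h.1) (Fin.ext h.2))
    exact Nat.not_even_iff_odd.2 hodd (even_syncGraph_degree hu hv hwq.2.2.1 h₁ h₂ h₀)
  have hpath : ReachIn (fun p : Fin (L₁ + 1) × Fin (L₂ + 1) => u p.1 = v p.2) G.Adj (0, 0) w :=
    ⟨by simp [hu.start, hv.start], ReflTransGen.mono (fun _ _ h => ⟨h, h.2.2.2⟩) _ _
      ((G.reachable_iff_reflTransGen _ _).1 hreach)⟩
  obtain ⟨K, x, hx, hxstep, hx0, hxK⟩ := exists_seq_iff_reachIn.2 hpath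
  refine ⟨K, fun t => (x t).1, fun t => (x t).2, ⟨by simp [hx0], fun t _ => Fin.is_le _,
    fun _ _ => rfl, fun t ht => (hxstep t ht).1⟩, ⟨by simp [hx0], fun t _ => Fin.is_le _,
    fun t ht => (hx t ht).symm, fun t ht => (hxstep t ht).2.1⟩, by simpa [hxK] using htop⟩

theorem exists_common_reparam {ι : Type*} [DecidableEq ι] (S : Finset ι) {L : ι → ℕ} {N : ℕ}
    {w : ι → ℕ → ℤ} (hw : ∀ j ∈ S, IsClimb (L j) N (w j)) :
    ∃ (K : ℕ) (H : ℕ → ℤ) (pos : ι → ℕ → ℕ),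
      IsClimb K N H ∧ ∀ j ∈ S, IsReparam K H (L j) (w j) (pos j) := by
  induction S using Finset.induction_on with
  | empty =>
    refine ⟨N, fun t => (min t N : ℕ), fun _ _ => 0,
      ⟨by simp, by simp, fun t ht => .inl ?_, fun t ht => ⟨by positivity, by simp⟩⟩, by simp⟩
    simp only [Nat.min_eq_left ht.le, Nat.min_eq_left (Nat.succ_le_of_lt ht)]
    push_cast
    rfl
  | insert j S hj ih =>
    obtain ⟨K, H, pos, hH, hpos⟩ := ih fun i hi => hw i (mem_insert_of_mem hi)
    obtain ⟨K', a, b, ha, hb, haK⟩ := hH.mountain_climbing (hw j (mem_insert_self j S))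
    refine ⟨K', H ∘ a, fun i => if i = j then b else pos i ∘ a, hH.of_isReparam ha haK,
      fun i hi => ?_⟩
    by_cases hij : i = j
    · subst hij
      simpa using hb
    · simpa [hij] using (hpos i ((mem_insert.1 hi).resolve_left hij)).comp ha

end MountainClimbing

namespace BernoulliHyperplane

variable {n : ℕ}

theorem isUnitStep_iff_abs_sub_eq_one {a b : ℤ} : IsUnitStep a b ↔ |a - b| = 1 := by
  rw [IsUnitStep, abs_eq zero_le_one]
  omega

theorem latAdj_iff {v w : Fin n → ℤ} :
    latAdj v w ↔ ∃ i, IsUnitStep (v i) (w i) ∧ ∀ k ≠ i, v k = w k := by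
  simp_rw [isUnitStep_iff_abs_sub_eq_one, latAdj]
  constructor
  · intro h
    obtain ⟨i, hi⟩ : ∃ i, v i ≠ w i := by
      by_contra! hvw
      simp [hvw] at h
    have hsplit := add_sum_erase _ (fun k => |v k - w k|) (mem_univ i)
    have hrest : 0 ≤ ∑ k ∈ univ.erase i, |v k - w k| := sum_nonneg fun k _ => abs_nonneg _
    have hi' : 1 ≤ |v i - w i| := Int.one_le_abs (sub_ne_zero.2 hi)
    refine ⟨i, by omega, fun k hk => ?_⟩
    have := (sum_eq_zero_iff_of_nonneg fun k _ => abs_nonneg (v k - w k)).1 (by omega) k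
      (mem_erase.2 ⟨hk, mem_univ k⟩)
    exact sub_eq_zero.1 (abs_eq_zero.1 this)
  · rintro ⟨i, hi, hrest⟩
    rw [sum_eq_single i (fun k _ hk => by simp [hrest k hk]) (by simp), hi]

theorem latAdj_update {v : Fin n → ℤ} {i : Fin n} {a b : ℤ} (h : IsUnitStep a b) :
    latAdj (update v i a) (update v i b) :=
  latAdj_iff.2 ⟨i, by simpa using h, fun k hk => by simp [update_of_ne hk]⟩

theorem latAdj_proj (J : Finset (Fin n)) {v w : Fin n → ℤ} (h : latAdj v w) :
    latAdj (proj J v) (proj J w) ∨ proj J v = proj J w := by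
  obtain ⟨i, hi, hrest⟩ := latAdj_iff.1 h
  by_cases hiJ : i ∈ J
  · refine .inl (latAdj_iff.2 ⟨i, by simpa [proj, hiJ] using hi, fun k hk => ?_⟩)
    simp [proj, hrest k hk]
  · refine .inr (funext fun k => ?_)
    by_cases hkJ : k ∈ J
    · simp [proj, hkJ, hrest k (ne_of_mem_of_not_mem hkJ hiJ)]
    · simp [proj, hkJ]

theorem proj_pair_congr {e0 j : Fin n} {v w : Fin n → ℤ} (h0 : v e0 = w e0)
    (hj : v j = w j) : proj {e0, j} v = proj {e0, j} w := by
  funext i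
  by_cases hi : i ∈ ({e0, j} : Finset (Fin n))
  · rcases mem_insert.1 hi with rfl | hi
    · simp [proj, h0]
    · rw [mem_singleton.1 hi]
      simp [proj, hj]
  · simp [proj, hi]

theorem proj_proj (J : Finset (Fin n)) (v : Fin n → ℤ) : proj J (proj J v) = proj J v := by
  funext i
  by_cases hi : i ∈ J <;> simp [proj, hi]

def planeAdj (p q : ℤ × ℤ) : Prop :=
  (IsUnitStep p.1 q.1 ∧ p.2 = q.2) ∨ (p.1 = q.1 ∧ IsUnitStep p.2 q.2)

theorem planeAdj_of_latAdj {e0 j : Fin n} (hj : j ≠ e0) {v w : Fin n → ℤ}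
    (hv : ∀ i, i ≠ e0 → i ≠ j → v i = 0) (hw : ∀ i, i ≠ e0 → i ≠ j → w i = 0)
    (h : latAdj v w) : planeAdj (v e0, v j) (w e0, w j) := by
  obtain ⟨i, hi, hrest⟩ := latAdj_iff.1 h
  by_cases hie : i = e0
  · subst hie
    exact .inl ⟨hi, hrest j hj⟩
  by_cases hij : i = j
  · subst hij
    exact .inr ⟨hrest e0 (Ne.symm hie), hi⟩
  rw [hv i hie hij, hw i hie hij] at hi
  rcases hi with h | h <;> omega

/-- `c i` is a point of the `i`-th maximal horizontal run of a path in `Q`; the path moves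
vertically from that run to the next one at abscissa `(c (i + 1)).2`. -/
structure IsBlockChain (Q : ℤ × ℤ → Prop) (L : ℕ) (c : ℕ → ℤ × ℤ) : Prop where
  step : ∀ i < L, IsUnitStep (c i).1 (c (i + 1)).1
  link : ∀ i < L, ReachIn (fun z => Q ((c i).1, z)) IsUnitStep (c i).2 (c (i + 1)).2
  mem : ∀ i ≤ L, Q (c i)

theorem exists_isBlockChain {Q : ℤ × ℤ → Prop} {p q : ℤ × ℤ} (h : ReachIn Q planeAdj p q) :
    ∃ L c, IsBlockChain Q L c ∧ c 0 = p ∧ (c L).1 = q.1 ∧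
      ReachIn (fun z => Q (q.1, z)) IsUnitStep (c L).2 q.2 := by
  obtain ⟨hp, h⟩ := h
  induction h with
  | refl =>
    exact ⟨0, fun _ => p, ⟨fun i hi => absurd hi (Nat.not_lt_zero i),
      fun i hi => absurd hi (Nat.not_lt_zero i), fun _ _ => hp⟩, rfl, rfl, .refl hp⟩
  | @tail b d _ hbd ih =>
    obtain ⟨L, c, hc, hc0, hcL, hreach⟩ := ih
    obtain ⟨⟨hstep, h2⟩ | ⟨h1, hstep⟩, hd⟩ := hbd
    · have hc' : ∀ i ≤ L, update c (L + 1) d i = c i := fun i hi => update_of_ne (by omega) _ _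
      refine ⟨L + 1, update c (L + 1) d, ⟨fun i hi => ?_, fun i hi => ?_, fun i hi => ?_⟩,
        by rw [hc' 0 L.zero_le, hc0], by simp, by rw [update_self]; exact .refl hd⟩
      · rcases Nat.lt_succ_iff_lt_or_eq.1 hi with hi | rfl
        · rw [hc' i hi.le, hc' (i + 1) hi]
          exact hc.step i hi
        · simpa [hc' i le_rfl, hcL] using hstep
      · rcases Nat.lt_succ_iff_lt_or_eq.1 hi with hi | rfl
        · rw [hc' i hi.le, hc' (i + 1) hi]
          exact hc.link i hi
        · simpa [hc' i le_rfl, hcL, ← h2] using hreach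
      · rcases Nat.le_succ_iff.1 hi with hi | rfl
        · rw [hc' i hi]
          exact hc.mem i hi
        · simpa using hd
    · exact ⟨L, c, hc, hc0, hcL.trans h1, by rw [← h1]; exact hreach.tail hstep (h1 ▸ hd)⟩

theorem IsBlockChain.isClimb {Q : ℤ × ℤ → Prop} {L : ℕ} {c : ℕ → ℤ × ℤ} {N : ℤ}
    (hc : IsBlockChain Q L c) (hQ : ∀ p, Q p → 0 ≤ p.1 ∧ p.1 ≤ N) (h0 : (c 0).1 = 0)
    (hL : (c L).1 = N) : MountainClimbing.IsClimb L N fun i => (c i).1 :=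
  ⟨h0, hL, hc.step, fun i hi => hQ _ (hc.mem i hi)⟩

theorem IsBlockChain.exists_crossing {Q : ℤ × ℤ → Prop} {L : ℕ} {c : ℕ → ℤ × ℤ}
    (hc : IsBlockChain Q L c) {i i' : ℕ} (hi : i ≤ L) (hi' : i' ≤ L) (h : IsUnitStep i i') :
    ∃ z, ReachIn (fun z => Q ((c i).1, z)) IsUnitStep (c i).2 z ∧
      ReachIn (fun z => Q ((c i').1, z)) IsUnitStep (c i').2 z := by
  rcases h with rfl | rfl
  · exact ⟨_, hc.link i (by omega), .refl (hc.mem _ hi')⟩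
  · exact ⟨_, .refl (hc.mem _ hi), hc.link i' (by omega)⟩

section Box

variable (e0 : Fin n) (N : ℤ) (Q : Fin n → ℤ × ℤ → Prop)

def ProjectsInto (x : Fin n → ℤ) : Prop :=
  (0 ≤ x e0 ∧ x e0 ≤ N) ∧ ∀ j ≠ e0, Q j (x e0, x j)

variable {e0 N Q}

theorem reachIn_projectsInto_of_horizontal {x y : Fin n → ℤ} (hy : y e0 = x e0)
    (hx : 0 ≤ x e0 ∧ x e0 ≤ N)
    (h : ∀ j ≠ e0, ReachIn (fun z => Q j (x e0, z)) IsUnitStep (x j) (y j)) :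
    ReachIn (ProjectsInto e0 N Q) latAdj x y := by
  classical
  suffices ∀ s : Finset (Fin n), ReachIn (ProjectsInto e0 N Q) latAdj x (s.piecewise y x) by
    simpa using this univ
  intro s
  induction s using Finset.induction_on with
  | empty => simpa using ReachIn.refl ⟨hx, fun j hj => (h j hj).1⟩
  | insert k s hk ih =>
    rw [piecewise_insert]
    set cur := s.piecewise y x
    have hcur : ∀ i, cur i = x i ∨ cur i = y i := fun i => by
      by_cases hi : i ∈ s <;> simp [cur, hi]
    have hcurk : update cur k (x k) = cur := by simp [cur, hk]
    by_cases hke : k = e0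
    · subst hke
      rwa [hy, hcurk]
    have hcur0 : cur e0 = x e0 := (hcur e0).elim id (·.trans hy)
    have hmap : ReachIn (ProjectsInto e0 N Q) latAdj (update cur k (x k)) (update cur k (y k)) :=
      (h k hke).map (update cur k) (fun z hz => ⟨?_, fun j hj => ?_⟩)
        fun _ _ _ _ hzz' => .inl (latAdj_update hzz')
    · rw [hcurk] at hmap
      exact ih.trans hmap
    · simpa [update_of_ne (Ne.symm hke), hcur0] using hx
    · rw [update_of_ne (Ne.symm hke), hcur0]
      by_cases hjk : j = k
      · subst hjk
        simpa using hz
      · rw [update_of_ne hjk]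
        rcases hcur j with hj' | hj'
        · exact hj' ▸ (h j hj).1
        · exact hj' ▸ (h j hj).target

theorem reachIn_projectsInto_of_sync_step {h h' : ℤ} (hh : IsUnitStep h h')
    (hh' : 0 ≤ h' ∧ h' ≤ N) {x r r' z : Fin n → ℤ} (hx : x e0 = h) (hxN : 0 ≤ h ∧ h ≤ N)
    (hxr : ∀ j ≠ e0, ReachIn (fun z => Q j (h, z)) IsUnitStep (r j) (x j))
    (hz : ∀ j ≠ e0, ReachIn (fun z => Q j (h, z)) IsUnitStep (r j) (z j) ∧
      ReachIn (fun z => Q j (h', z)) IsUnitStep (r' j) (z j)) :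
    ReachIn (ProjectsInto e0 N Q) latAdj x (update z e0 h') := by
  have hhor : ReachIn (ProjectsInto e0 N Q) latAdj x (update z e0 h) :=
    reachIn_projectsInto_of_horizontal (by simp [hx]) (hx ▸ hxN) fun j hj => by
      rw [update_of_ne hj, hx]
      exact ((hxr j hj).symm fun _ _ => IsUnitStep.symm).trans (hz j hj).1
  refine hhor.tail (by simpa using latAdj_update (v := z) (i := e0) hh) ⟨by simpa using hh',
    fun j hj => ?_⟩
  simpa [update_of_ne hj] using (hz j hj).2.target

end Box

theorem exists_reachIn_projectsInto_of_isReparam {e0 : Fin n} {N : ℤ}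
    {Q : Fin n → ℤ × ℤ → Prop} {K : ℕ} {H : ℕ → ℤ} {L : Fin n → ℕ} {c : Fin n → ℕ → ℤ × ℤ}
    {pos : Fin n → ℕ → ℕ} (hc : ∀ j ≠ e0, IsBlockChain (Q j) (L j) (c j))
    (hH : MountainClimbing.IsClimb K N H)
    (hpos : ∀ j ≠ e0, MountainClimbing.IsReparam K H (L j) (fun i => (c j i).1) (pos j)) :
    ∀ t ≤ K, ∃ x, ReachIn (ProjectsInto e0 N Q) latAdj (update (fun j => (c j 0).2) e0 0) x ∧
      x e0 = H t ∧
        ∀ j ≠ e0, ReachIn (fun z => Q j (H t, z)) IsUnitStep (c j (pos j t)).2 (x j) := by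
  intro t
  induction t with
  | zero =>
    intro _
    have hQ₀ : ∀ j ≠ e0, Q j (0, (c j 0).2) := fun j hj => by
      have h := (hc j hj).mem 0 (Nat.zero_le _)
      rwa [show c j 0 = (0, (c j 0).2) by
        rw [← hH.start, ← (hpos j hj).eq 0 (Nat.zero_le _), (hpos j hj).start]] at h
    refine ⟨_, .refl ⟨by simpa [hH.start] using hH.bounded 0 (Nat.zero_le _), fun j hj => ?_⟩,
      by simp [hH.start], fun j hj => ?_⟩
    · simpa [update_of_ne hj] using hQ₀ j hj
    · simpa [update_of_ne hj, (hpos j hj).start, hH.start] using .refl (hQ₀ j hj)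
  | succ t ih =>
    intro (ht : t < K)
    obtain ⟨x, hx₀, hxt, hx⟩ := ih ht.le
    have hcross : ∀ j ≠ e0, ∃ z,
        ReachIn (fun z => Q j (H t, z)) IsUnitStep (c j (pos j t)).2 z ∧
          ReachIn (fun z => Q j (H (t + 1), z)) IsUnitStep (c j (pos j (t + 1))).2 z := by
      intro j hj
      have hp := hpos j hj
      simpa [← hp.eq t ht.le, ← hp.eq (t + 1) ht] using (hc j hj).exists_crossing
        (hp.le t ht.le) (hp.le (t + 1) ht) (hp.step t ht)
    choose! z hz using hcross
    refine ⟨update z e0 (H (t + 1)), hx₀.trans (reachIn_projectsInto_of_sync_step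
      (hH.step t ht) (hH.bounded _ ht) hxt (hH.bounded t ht.le) hx hz), by simp,
      fun j hj => by simpa [update_of_ne hj] using (hz j hj).2⟩

theorem exists_reachIn_projectsInto {e0 : Fin n} {N : ℕ} {Q : Fin n → ℤ × ℤ → Prop}
    (hQ : ∀ j ≠ e0, ∃ L c, IsBlockChain (Q j) L c ∧
      MountainClimbing.IsClimb L N fun i => (c i).1) :
    ∃ x y, x e0 = 0 ∧ y e0 = (N : ℤ) ∧ ReachIn (ProjectsInto e0 N Q) latAdj x y := by
  classical
  choose! L c hc hclimb using hQ
  obtain ⟨K, H, pos, hH, hpos⟩ := MountainClimbing.exists_common_reparam (univ.erase e0)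
    (w := fun j i => (c j i).1) fun j hj => hclimb j (ne_of_mem_erase hj)
  obtain ⟨x, hx₀, hxK, -⟩ := exists_reachIn_projectsInto_of_isReparam hc hH
    (fun j hj => hpos j (mem_erase.2 ⟨hj, mem_univ j⟩)) K le_rfl
  exact ⟨_, x, by simp, hxK.trans hH.finish, hx₀⟩

theorem btBox_iff {e0 : Fin n} {m : Fin n → ℕ} {good : (Fin n → ℤ) → Prop} :
    btBox e0 m good ↔ ∃ x y, x e0 = 0 ∧ y e0 = (m e0 : ℤ) ∧
      ReachIn (fun v => (∀ i, 0 ≤ v i ∧ v i ≤ (m i : ℤ)) ∧ good v) latAdj x y := by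
  unfold btBox
  exact exists_seq_iff_exists_reachIn (P := fun v => (∀ i, 0 ≤ v i ∧ v i ≤ (m i : ℤ)) ∧ good v)
    (R := latAdj) (A := fun v => v e0 = 0) (B := fun v => v e0 = (m e0 : ℤ))

theorem btPlane_iff {e0 j : Fin n} {m : Fin n → ℕ} {good : (Fin n → ℤ) → Prop} :
    btPlane e0 j m good ↔ ∃ x y, x e0 = 0 ∧ y e0 = (m e0 : ℤ) ∧
      ReachIn (fun v => (0 ≤ v e0 ∧ v e0 ≤ (m e0 : ℤ)) ∧ (0 ≤ v j ∧ v j ≤ (m j : ℤ)) ∧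
        (∀ i, i ≠ e0 → i ≠ j → v i = 0) ∧ good v) latAdj x y := by
  unfold btPlane
  exact exists_seq_iff_exists_reachIn (P := fun v => (0 ≤ v e0 ∧ v e0 ≤ (m e0 : ℤ)) ∧
    (0 ≤ v j ∧ v j ≤ (m j : ℤ)) ∧ (∀ i, i ≠ e0 → i ≠ j → v i = 0) ∧ good v) (R := latAdj)
    (A := fun v => v e0 = 0) (B := fun v => v e0 = (m e0 : ℤ))

theorem btPlane_of_btBox {e0 j : Fin n} {m : Fin n → ℕ}
    {good good' : (Fin n → ℤ) → Prop} (hgood : ∀ v, good v → good' (proj {e0, j} v))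
    (h : btBox e0 m good) : btPlane e0 j m good' := by
  obtain ⟨x, y, hx, hy, hxy⟩ := btBox_iff.1 h
  refine btPlane_iff.2 ⟨proj {e0, j} x, proj {e0, j} y, by simpa [proj] using hx,
    by simpa [proj] using hy, hxy.map _ (fun v hv => ?_) fun _ _ _ _ h => latAdj_proj _ h⟩
  exact ⟨by simpa [proj] using hv.1 e0, by simpa [proj] using hv.1 j,
    fun i hi hi' => by simp [proj, hi, hi'], hgood v hv.2⟩

theorem btBox_of_forall_btPlane {e0 : Fin n} {m : Fin n → ℕ} (G : Fin n → (Fin n → ℤ) → Prop)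
    (hG : ∀ j v w, v e0 = w e0 → v j = w j → G j v → G j w)
    (h : ∀ j ≠ e0, btPlane e0 j m (G j)) : btBox e0 m fun v => ∀ j ≠ e0, G j v := by
  let Q : Fin n → ℤ × ℤ → Prop := fun j p =>
    (0 ≤ p.1 ∧ p.1 ≤ (m e0 : ℤ)) ∧ (0 ≤ p.2 ∧ p.2 ≤ (m j : ℤ)) ∧
      ∃ v, v e0 = p.1 ∧ v j = p.2 ∧ G j v
  have hchain : ∀ j ≠ e0, ∃ L c, IsBlockChain (Q j) L c ∧
      MountainClimbing.IsClimb L (m e0 : ℤ) fun i => (c i).1 := by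
    intro j hj
    obtain ⟨x, y, hx, hy, hxy⟩ := btPlane_iff.1 (h j hj)
    obtain ⟨L, c, hc, hc0, hcL, -⟩ := exists_isBlockChain (hxy.map (P' := Q j) (R' := planeAdj)
      (fun v => (v e0, v j)) (fun v hv => ⟨hv.1, hv.2.1, v, rfl, rfl, hv.2.2.2⟩)
      fun v w hv hw hvw => .inl (planeAdj_of_latAdj hj hv.2.2.1 hw.2.2.1 hvw))
    exact ⟨L, c, hc, hc.isClimb (fun p hp => hp.1) (by rw [hc0]; exact hx)
      (by rw [hcL]; exact hy)⟩
  obtain ⟨x, y, hx, hy, hxy⟩ := exists_reachIn_projectsInto hchain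
  refine btBox_iff.2 ⟨x, y, hx, hy, hxy.mono (fun v hv => ⟨fun i => ?_, fun j hj => ?_⟩)
    fun _ _ => id⟩
  · by_cases hi : i = e0
    · exact hi ▸ hv.1
    · exact (hv.2 i hi).2.1
  · obtain ⟨w, hw0, hwj, hGw⟩ := (hv.2 j hj).2.2
    exact hG j w v hw0 hwj hGw

theorem btBox_iff_forall_btPlane {e0 : Fin n} {m : Fin n → ℕ}
    (G : Fin n → (Fin n → ℤ) → Prop) :
    btBox e0 m (fun v => ∀ j, j ≠ e0 → G j (proj {e0, j} v)) ↔
      ∀ j ≠ e0, btPlane e0 j m fun v => G j (proj {e0, j} v) :=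
  ⟨fun h j hj => btPlane_of_btBox (fun v hv => by rw [proj_proj]; exact hv j hj) h,
    btBox_of_forall_btPlane _ fun _ _ _ h0 hj hv => by rwa [← proj_pair_congr h0 hj]⟩

theorem measurableSet_btPlane {Ω : Type*} {mΩ : MeasurableSpace Ω} (e0 j : Fin n)
    (m : Fin n → ℕ) (G : (Fin n → ℤ) → Ω → Prop) (hG : ∀ v, MeasurableSet[mΩ] {a | G v a}) :
    MeasurableSet[mΩ] {a | btPlane e0 j m fun v => G v a} := by
  refine measurableSet_setOf_exists_seq (fun v a => (0 ≤ v e0 ∧ v e0 ≤ (m e0 : ℤ)) ∧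
    (0 ≤ v j ∧ v j ≤ (m j : ℤ)) ∧ (∀ i, i ≠ e0 → i ≠ j → v i = 0) ∧ G v a) (fun v => ?_)
    (fun T x => (∀ t < T, latAdj (x t) (x (t + 1))) ∧ x 0 e0 = 0 ∧ x T e0 = (m e0 : ℤ))
    fun T x y hxy ⟨h1, h2, h3⟩ =>
      ⟨fun t ht => hxy t ht.le ▸ hxy (t + 1) ht ▸ h1 t ht, hxy 0 T.zero_le ▸ h2, hxy T le_rfl ▸ h3⟩
  by_cases hv : (0 ≤ v e0 ∧ v e0 ≤ (m e0 : ℤ)) ∧ (0 ≤ v j ∧ v j ≤ (m j : ℤ)) ∧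
    (∀ i, i ≠ e0 → i ≠ j → v i = 0)
  · convert hG v using 3
    exact and_iff_right hv.1 |>.trans (and_iff_right hv.2.1) |>.trans (and_iff_right hv.2.2)
  · convert @MeasurableSet.empty _ mΩ
    exact Set.eq_empty_of_forall_notMem fun a h => hv ⟨h.1, h.2.1, h.2.2.1⟩

theorem crossing_probability_product_general (n : ℕ)
    (e0 : Fin n)
    (p : Finset (Fin n) → ℝ) (Ω : Type) [MeasurableSpace Ω] (μ : Measure Ω)
    (F : Finset (Fin n) → (Fin n → ℤ) → Ω → Bool)
    (hperc : IsHyperplanePercolation n 2 p μ F)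
    (m : Fin n → ℕ) :
    μ {a | btBox e0 m
        (fun v => ∀ j, j ≠ e0 → F {e0, j} (proj {e0, j} v) a = true)} =
      ∏ j ∈ Finset.univ.erase e0,
        μ {a | btPlane e0 j m (fun v => F {e0, j} (proj {e0, j} v) a = true)} := by
  obtain ⟨-, hmeas, hindep, -⟩ := hperc
  have hevent : {a | btBox e0 m fun v => ∀ j, j ≠ e0 → F {e0, j} (proj {e0, j} v) a = true} =
      ⋂ j ∈ univ.erase e0, {a | btPlane e0 j m fun v => F {e0, j} (proj {e0, j} v) a = true} := by
    ext a
    simpa using btBox_iff_forall_btPlane fun j v => F {e0, j} v a = true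
  let T (j : Fin n) : Set {q : Finset (Fin n) × (Fin n → ℤ) //
      q.1.card = 2 ∧ ∀ i ∉ q.1, q.2 i = 0} := {q | q.1.1 = {e0, j}}
  have hT : Pairwise (Disjoint on T) := fun j j' hjj' => Set.disjoint_left.2 fun q hq hq' => by
    have hj : e0 ≠ j := card_pair_eq_two_iff.1 ((hq : q.1.1 = _) ▸ q.2.1)
    have : j ∈ ({e0, j'} : Finset (Fin n)) :=
      (hq' : q.1.1 = _) ▸ hq ▸ mem_insert_of_mem (mem_singleton_self j)
    exact hjj' (by simpa [hj.symm] using this)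
  have hF : ∀ j ≠ e0, ∀ v, MeasurableSet[⨆ q ∈ T j, MeasurableSpace.comap
      (fun a => F q.1.1 q.1.2 a) inferInstance] {a | F {e0, j} (proj {e0, j} v) a = true} :=
    fun j hj v => le_iSup₂ (f := fun q (_ : q ∈ T j) => MeasurableSpace.comap
      (fun a => F q.1.1 q.1.2 a) inferInstance) ⟨({e0, j}, proj {e0, j} v), card_pair hj.symm,
        fun i hi => by simp [proj, hi]⟩ rfl _ ⟨{true}, measurableSet_singleton true, rfl⟩
  rw [hevent]
  exact (hindep.iIndep.iIndep_biSup (fun q => (hmeas _ _).comap_le) hT).meas_biInter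
    fun j hj => measurableSet_btPlane _ _ _ _ (hF j (ne_of_mem_erase hj))

/-- the probability that the field `ξ(x) = ∏_{j≥2} ω_{I_j}(π_{I_j}(x))` has a
bottom-to-top crossing of `B` equals the product over `j` of the probabilities that
`ω_{I_j}` crosses the projected rectangle `π_{I_j}(B)` from bottom to top. -/
theorem crossing_probability_product (n : ℕ) (hn : 3 ≤ n)
    (e0 : Fin n) (he0 : (e0 : ℕ) = 0)
    (p : Finset (Fin n) → ℝ) (Ω : Type) [MeasurableSpace Ω] (μ : Measure Ω)
    (F : Finset (Fin n) → (Fin n → ℤ) → Ω → Bool)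
    (hperc : IsHyperplanePercolation n 2 p μ F)
    (N : ℕ) (m : Fin n → ℕ) (hm : m e0 = N) :
    μ {a | btBox e0 m
        (fun v => ∀ j, j ≠ e0 → F {e0, j} (proj {e0, j} v) a = true)} =
      ∏ j ∈ Finset.univ.erase e0,
        μ {a | btPlane e0 j m (fun v => F {e0, j} (proj {e0, j} v) a = true)} :=
  crossing_probability_product_general n e0 p Ω μ F hperc m

end BernoulliHyperplane
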